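/- arXiv:2303.17721 — 4 statements merged into one kernel-verified Lean document; each statement's English description precedes it below -/
import Mathlib

section
/- Let n ≥ 1 be an integer. There exists a constant C > 0 (depending only on n) such that for every measurable function f : ℝ^n → ℝ and every x ∈ ℝ^n and t > 0, √t · ∫_{ℝ^n} ‖∇K_t(x − y)‖ · |f(y)| dy ≤ C · sup_{r>0} (1/vol(B(x,r))) ∫_{B(x,r)} |f(y)| dy, where the right-hand supremum is taken over all Euclidean balls B(x,r) centered at x. -/
open MeasureTheory Metric
open scoped ENNReal NNReal

/-- The Gaussian heat kernel `K_t(x) = (4πt)^{-n/2} exp(-‖x‖²/(4t))` on `ℝ^n`. -/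
noncomputable def heatKernel (n : ℕ) (t : ℝ) (x : EuclideanSpace ℝ (Fin n)) : ℝ :=
  (4 * Real.pi * t) ^ (-(n : ℝ) / 2) * Real.exp (-‖x‖ ^ 2 / (4 * t))

/-- The gradient of the Gaussian heat kernel, `∇K_t(x) = -(x/(2t)) K_t(x)`. -/
noncomputable def gradHeatKernel (n : ℕ) (t : ℝ) (x : EuclideanSpace ℝ (Fin n)) :
    EuclideanSpace ℝ (Fin n) :=
  (-(1 / (2 * t)) * heatKernel n t x) • x


/-!
Since `s e^{-s²} ≤ e^{-s²/2}`, the function `√t ‖∇K_t(z)‖` is at most `(4πt)^{-n/2} e^{-‖z‖²/(8t)}`.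
Cover `ℝⁿ` by the ball `B(x, √t)` and the dyadic shells `2^k √t ≤ ‖x - y‖ < 2^{k+1} √t`. On the
`k`-th shell the kernel is at most `(4πt)^{-n/2} e^{-4^k/8}`, and the integral of `|f|` over the
enclosing ball `B(x, 2^{k+1} √t)` is at most its volume `2^{(k+1)n} t^{n/2} |B(0,1)|` times the
maximal average. The powers of `t` cancel, and the resulting series `∑ 2^{kn} e^{-4^{k-1}/8}`
converges by the ratio test.
-/

open Filter

noncomputable def centeredMaximal {α : Type*} [PseudoMetricSpace α] [MeasurableSpace α]
    (μ : Measure α) (g : α → ℝ≥0∞) (x : α) : ℝ≥0∞ :=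
  ⨆ (r : ℝ) (_ : 0 < r), (μ (ball x r))⁻¹ * ∫⁻ y in ball x r, g y ∂μ

section Dyadic

variable {α : Type*} [PseudoMetricSpace α] {Φ : α → ℝ≥0∞} {a : ℕ → ℝ≥0∞} {x : α} {ρ : ℝ}

lemma exists_mem_ball_two_pow_mul_and_le (hρ : 0 < ρ) (h₀ : ∀ y, Φ y ≤ a 0)
    (hdecay : ∀ k y, 2 ^ k * ρ ≤ dist y x → Φ y ≤ a (k + 1)) (y : α) :
    ∃ k, y ∈ ball x (2 ^ k * ρ) ∧ Φ y ≤ a k := by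
  rcases lt_or_ge (dist y x) ρ with hnear | hfar
  · exact ⟨0, mem_ball.2 (by simpa using hnear), h₀ y⟩
  · obtain ⟨k, hk, hk'⟩ := exists_nat_pow_near ((one_le_div hρ).2 hfar) one_lt_two
    exact ⟨k + 1, mem_ball.2 ((div_lt_iff₀ hρ).1 hk'), hdecay k y ((le_div_iff₀ hρ).1 hk)⟩

variable [MeasurableSpace α] {μ : Measure α} {g : α → ℝ≥0∞}

lemma setLIntegral_ball_le_measure_mul_centeredMaximal {r : ℝ} (hr : 0 < r)
    (hfin : μ (ball x r) ≠ ∞) :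
    ∫⁻ y in ball x r, g y ∂μ ≤ μ (ball x r) * centeredMaximal μ g x := by
  rcases eq_or_ne (μ (ball x r)) 0 with hzero | hpos
  · rw [setLIntegral_measure_zero _ _ hzero]
    exact bot_le
  calc ∫⁻ y in ball x r, g y ∂μ
      = μ (ball x r) * ((μ (ball x r))⁻¹ * ∫⁻ y in ball x r, g y ∂μ) := by
        rw [← mul_assoc, ENNReal.mul_inv_cancel hpos hfin, one_mul]
    _ ≤ μ (ball x r) * centeredMaximal μ g x :=
        mul_le_mul_right (le_iSup₂ (f := fun (r : ℝ) (_ : 0 < r) ↦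
          (μ (ball x r))⁻¹ * ∫⁻ y in ball x r, g y ∂μ) r hr) _

variable [OpensMeasurableSpace α]

lemma lintegral_mul_le_tsum_mul_setLIntegral_ball (hg : AEMeasurable g μ) (hρ : 0 < ρ)
    (h₀ : ∀ y, Φ y ≤ a 0) (hdecay : ∀ k y, 2 ^ k * ρ ≤ dist y x → Φ y ≤ a (k + 1)) :
    ∫⁻ y, Φ y * g y ∂μ ≤ ∑' k, a k * ∫⁻ y in ball x (2 ^ k * ρ), g y ∂μ := by
  have hpointwise : ∀ y,
      Φ y * g y ≤ ∑' k, (ball x (2 ^ k * ρ)).indicator (fun z ↦ a k * g z) y := fun y ↦ by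
    obtain ⟨k, hy, hΦ⟩ := exists_mem_ball_two_pow_mul_and_le hρ h₀ hdecay y
    calc Φ y * g y ≤ a k * g y := mul_le_mul_left hΦ _
      _ = (ball x (2 ^ k * ρ)).indicator (fun z ↦ a k * g z) y :=
          (Set.indicator_of_mem hy (fun z ↦ a k * g z)).symm
      _ ≤ _ := ENNReal.le_tsum k
  calc ∫⁻ y, Φ y * g y ∂μ
      ≤ ∫⁻ y, ∑' k, (ball x (2 ^ k * ρ)).indicator (fun z ↦ a k * g z) y ∂μ :=
        lintegral_mono hpointwise
    _ = ∑' k, a k * ∫⁻ y in ball x (2 ^ k * ρ), g y ∂μ := by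
        rw [lintegral_tsum fun k ↦ (hg.const_mul _).indicator measurableSet_ball]
        simp_rw [lintegral_indicator measurableSet_ball]
        exact tsum_congr fun k ↦ lintegral_const_mul'' _ hg.restrict

lemma lintegral_mul_le_tsum_mul_centeredMaximal [ProperSpace α] [IsFiniteMeasureOnCompacts μ]
    (hg : AEMeasurable g μ) (hρ : 0 < ρ) (h₀ : ∀ y, Φ y ≤ a 0)
    (hdecay : ∀ k y, 2 ^ k * ρ ≤ dist y x → Φ y ≤ a (k + 1)) :
    ∫⁻ y, Φ y * g y ∂μ ≤ (∑' k, a k * μ (ball x (2 ^ k * ρ))) * centeredMaximal μ g x :=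
  calc ∫⁻ y, Φ y * g y ∂μ
      ≤ ∑' k, a k * ∫⁻ y in ball x (2 ^ k * ρ), g y ∂μ :=
        lintegral_mul_le_tsum_mul_setLIntegral_ball hg hρ h₀ hdecay
    _ ≤ ∑' k, a k * (μ (ball x (2 ^ k * ρ)) * centeredMaximal μ g x) :=
        ENNReal.tsum_le_tsum fun k ↦ mul_le_mul_right
          (setLIntegral_ball_le_measure_mul_centeredMaximal (by positivity)
            measure_ball_lt_top.ne) _
    _ = (∑' k, a k * μ (ball x (2 ^ k * ρ))) * centeredMaximal μ g x := by
        simp_rw [← mul_assoc, ENNReal.tsum_mul_right]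

end Dyadic

section HeatKernel

open Real

lemma le_exp_sq_div_two (s : ℝ) : s ≤ exp (s ^ 2 / 2) := by
  nlinarith [add_one_le_exp (s ^ 2 / 2), sq_nonneg (s - 1)]

lemma half_mul_exp_neg_sq_div_four_le (u : ℝ) : u / 2 * exp (-u ^ 2 / 4) ≤ exp (-u ^ 2 / 8) := by
  have hhalf := le_exp_sq_div_two (u / 2)
  rw [show (u / 2) ^ 2 / 2 = u ^ 2 / 8 by ring] at hhalf
  calc u / 2 * exp (-u ^ 2 / 4) ≤ exp (u ^ 2 / 8) * exp (-u ^ 2 / 4) := by gcongr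
    _ = exp (-u ^ 2 / 8) := by rw [← exp_add]; congr 1; ring

noncomputable def gaussDecay : ℕ → ℝ
  | 0 => 1
  | k + 1 => exp (-4 ^ k / 8)

lemma gaussDecay_pos : ∀ k, 0 < gaussDecay k
  | 0 => one_pos
  | _ + 1 => exp_pos _

lemma exp_neg_sq_div_eight_le_gaussDecay_zero (u : ℝ) : exp (-u ^ 2 / 8) ≤ gaussDecay 0 := by
  rw [gaussDecay, exp_le_one_iff]
  nlinarith [sq_nonneg u]

lemma exp_neg_sq_div_eight_le_gaussDecay_succ {u : ℝ} {k : ℕ} (hu : 2 ^ k ≤ u) :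
    exp (-u ^ 2 / 8) ≤ gaussDecay (k + 1) := by
  have hsq : (4 : ℝ) ^ k ≤ u ^ 2 := by
    rw [show (4 : ℝ) = 2 ^ 2 by norm_num, ← pow_mul, mul_comm, pow_mul]
    gcongr
  rw [gaussDecay, exp_le_exp]
  linarith

lemma summable_two_pow_pow_mul_gaussDecay (n : ℕ) :
    Summable fun k ↦ ((2 : ℝ) ^ k) ^ n * gaussDecay k := by
  rw [← summable_nat_add_iff 1]
  have hratio : ∀ k : ℕ, ‖((2 : ℝ) ^ (k + 1 + 1)) ^ n * gaussDecay (k + 1 + 1)‖ /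
      ‖((2 : ℝ) ^ (k + 1)) ^ n * gaussDecay (k + 1)‖ = 2 ^ n * exp (-(3 * 4 ^ k / 8)) := by
    intro k
    have hexp : exp (-4 ^ (k + 1) / 8) = exp (-(3 * 4 ^ k / 8)) * exp (-4 ^ k / 8) := by
      rw [← exp_add]; congr 1; ring
    simp only [gaussDecay, norm_mul, norm_pow, Real.norm_ofNat, Real.norm_of_nonneg (exp_pos _).le]
    rw [div_eq_iff (by positivity), hexp, pow_succ 2 (k + 1), mul_pow]
    ring
  refine summable_of_ratio_test_tendsto_lt_one zero_lt_one
    (Eventually.of_forall fun k ↦ (mul_pos (by positivity) (gaussDecay_pos _)).ne') ?_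
  simp_rw [hratio]
  have hgrow : Tendsto (fun k : ℕ ↦ 3 * (4 : ℝ) ^ k / 8) atTop atTop :=
    ((tendsto_pow_atTop_atTop_of_one_lt (by norm_num)).const_mul_atTop (by norm_num)).atTop_div_const
      (by norm_num)
  simpa using (tendsto_exp_neg_atTop_nhds_zero.comp hgrow).const_mul (2 ^ n)

lemma tsum_two_pow_pow_mul_gaussDecay_pos (n : ℕ) :
    0 < ∑' k, ((2 : ℝ) ^ k) ^ n * gaussDecay k :=
  (summable_two_pow_pow_mul_gaussDecay n).tsum_pos
    (fun k ↦ (mul_pos (by positivity) (gaussDecay_pos k)).le) 0 (by simp [gaussDecay])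

variable {n : ℕ} {t : ℝ}

lemma heatKernel_pos (ht : 0 < t) (z : EuclideanSpace ℝ (Fin n)) : 0 < heatKernel n t z := by
  unfold heatKernel
  have : 0 < 4 * π * t := by positivity
  positivity

lemma sqrt_mul_norm_gradHeatKernel (ht : 0 < t) (z : EuclideanSpace ℝ (Fin n)) :
    √t * ‖gradHeatKernel n t z‖ =
      (4 * π * t) ^ (-(n : ℝ) / 2) * (‖z‖ / √t / 2 * exp (-(‖z‖ / √t) ^ 2 / 4)) := by
  have hK := heatKernel_pos ht z
  rw [gradHeatKernel, norm_smul, Real.norm_eq_abs, abs_of_nonpos (by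
    have : 0 < 1 / (2 * t) := by positivity
    nlinarith), div_pow, sq_sqrt ht.le, heatKernel]
  field_simp
  rw [sq_sqrt ht.le]

lemma sqrt_mul_norm_gradHeatKernel_le (ht : 0 < t) (z : EuclideanSpace ℝ (Fin n)) :
    √t * ‖gradHeatKernel n t z‖ ≤ (4 * π * t) ^ (-(n : ℝ) / 2) * exp (-(‖z‖ / √t) ^ 2 / 8) := by
  rw [sqrt_mul_norm_gradHeatKernel ht]
  gcongr
  exact half_mul_exp_neg_sq_div_four_le _

lemma sqrt_mul_norm_gradHeatKernel_le_gaussDecay_zero (ht : 0 < t)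
    (z : EuclideanSpace ℝ (Fin n)) :
    √t * ‖gradHeatKernel n t z‖ ≤ (4 * π * t) ^ (-(n : ℝ) / 2) * gaussDecay 0 :=
  (sqrt_mul_norm_gradHeatKernel_le ht z).trans
    (by gcongr; exact exp_neg_sq_div_eight_le_gaussDecay_zero _)

lemma sqrt_mul_norm_gradHeatKernel_le_gaussDecay_succ (ht : 0 < t) {k : ℕ}
    {z : EuclideanSpace ℝ (Fin n)} (hz : 2 ^ k * √t ≤ ‖z‖) :
    √t * ‖gradHeatKernel n t z‖ ≤ (4 * π * t) ^ (-(n : ℝ) / 2) * gaussDecay (k + 1) :=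
  (sqrt_mul_norm_gradHeatKernel_le ht z).trans (by
    gcongr
    exact exp_neg_sq_div_eight_le_gaussDecay_succ ((le_div_iff₀ (sqrt_pos.2 ht)).2 hz))

lemma rpow_neg_half_mul_sqrt_pow (ht : 0 < t) :
    (4 * π * t) ^ (-(n : ℝ) / 2) * √t ^ n = (4 * π) ^ (-(n : ℝ) / 2) := by
  rw [mul_rpow (by positivity) ht.le, sqrt_eq_rpow, ← rpow_natCast, ← rpow_mul ht.le, mul_assoc,
    ← rpow_add ht]
  ring_nf
  rw [rpow_zero, mul_one]

lemma ofReal_mul_volume_ball_two_pow_mul_sqrt (ht : 0 < t) {c : ℝ} (hc : 0 ≤ c)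
    (x : EuclideanSpace ℝ (Fin n)) (k : ℕ) :
    ENNReal.ofReal ((4 * π * t) ^ (-(n : ℝ) / 2) * c) * volume (ball x (2 ^ k * √t)) =
      ENNReal.ofReal ((4 * π) ^ (-(n : ℝ) / 2) * ((2 ^ k) ^ n * c)) *
        volume (ball (0 : EuclideanSpace ℝ (Fin n)) 1) := by
  rw [Measure.addHaar_ball_mul_of_pos _ _ (by positivity),
    Measure.addHaar_ball_of_pos _ _ (sqrt_pos.2 ht), finrank_euclideanSpace_fin, ← mul_assoc,
    ← mul_assoc, ← ENNReal.ofReal_mul (by positivity), ← ENNReal.ofReal_mul (by positivity),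
    ← rpow_neg_half_mul_sqrt_pow ht]
  ring_nf

noncomputable def gradHeatMaximalConst (n : ℕ) : ℝ :=
  (4 * π) ^ (-(n : ℝ) / 2) * (∑' k, ((2 : ℝ) ^ k) ^ n * gaussDecay k) *
    (volume (ball (0 : EuclideanSpace ℝ (Fin n)) 1)).toReal

lemma gradHeatMaximalConst_pos (n : ℕ) : 0 < gradHeatMaximalConst n := by
  have hV : 0 < (volume (ball (0 : EuclideanSpace ℝ (Fin n)) 1)).toReal :=
    ENNReal.toReal_pos (measure_ball_pos _ _ one_pos).ne' measure_ball_lt_top.ne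
  have hB := tsum_two_pow_pow_mul_gaussDecay_pos n
  unfold gradHeatMaximalConst
  positivity

lemma tsum_ofReal_mul_volume_ball_two_pow_mul_sqrt (ht : 0 < t) (x : EuclideanSpace ℝ (Fin n)) :
    ∑' k, ENNReal.ofReal ((4 * π * t) ^ (-(n : ℝ) / 2) * gaussDecay k) *
        volume (ball x (2 ^ k * √t)) = ENNReal.ofReal (gradHeatMaximalConst n) := by
  have hB := tsum_two_pow_pow_mul_gaussDecay_pos n
  simp_rw [ofReal_mul_volume_ball_two_pow_mul_sqrt ht (gaussDecay_pos _).le,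
    ENNReal.tsum_mul_right]
  rw [← ENNReal.ofReal_tsum_of_nonneg
      (fun k ↦ (mul_pos (by positivity) (mul_pos (by positivity) (gaussDecay_pos k))).le)
      ((summable_two_pow_pow_mul_gaussDecay n).mul_left _), tsum_mul_left, gradHeatMaximalConst]
  conv_rhs => rw [ENNReal.ofReal_mul (by positivity), ENNReal.ofReal_toReal measure_ball_lt_top.ne]

end HeatKernel

theorem stmt2_general (n : ℕ) :
    ∃ C : ℝ, 0 < C ∧
      ∀ (f : EuclideanSpace ℝ (Fin n) → ℝ), Measurable f →
        ∀ (x : EuclideanSpace ℝ (Fin n)) (t : ℝ), 0 < t →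
          ENNReal.ofReal (Real.sqrt t) *
              (∫⁻ y, ENNReal.ofReal (‖gradHeatKernel n t (x - y)‖ * |f y|))
            ≤ ENNReal.ofReal C *
                ⨆ (r : ℝ) (_ : 0 < r),
                  (volume (ball x r))⁻¹ * ∫⁻ y in ball x r, ENNReal.ofReal |f y| := by
  refine ⟨gradHeatMaximalConst n, gradHeatMaximalConst_pos n, fun f hf x t ht ↦ ?_⟩
  calc ENNReal.ofReal √t * ∫⁻ y, ENNReal.ofReal (‖gradHeatKernel n t (x - y)‖ * |f y|)
      = ∫⁻ y, ENNReal.ofReal (√t * ‖gradHeatKernel n t (x - y)‖) * ENNReal.ofReal |f y| := by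
        rw [← lintegral_const_mul' _ _ ENNReal.ofReal_ne_top]
        congr with y
        rw [← ENNReal.ofReal_mul (by positivity), ← ENNReal.ofReal_mul (by positivity), mul_assoc]
    _ ≤ (∑' k, ENNReal.ofReal ((4 * Real.pi * t) ^ (-(n : ℝ) / 2) * gaussDecay k) *
          volume (ball x (2 ^ k * √t))) * centeredMaximal volume (fun y ↦ ENNReal.ofReal |f y|) x :=
        lintegral_mul_le_tsum_mul_centeredMaximal hf.abs.ennreal_ofReal.aemeasurable
          (Real.sqrt_pos.2 ht)
          (fun y ↦ ENNReal.ofReal_le_ofReal (sqrt_mul_norm_gradHeatKernel_le_gaussDecay_zero ht _))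
          (fun k y hy ↦ ENNReal.ofReal_le_ofReal (sqrt_mul_norm_gradHeatKernel_le_gaussDecay_succ ht
            (by rwa [dist_comm, dist_eq_norm] at hy)))
    _ = ENNReal.ofReal (gradHeatMaximalConst n) * centeredMaximal volume _ x := by
        rw [tsum_ofReal_mul_volume_ball_two_pow_mul_sqrt ht]

/-- Pointwise domination of the vertical heat maximal function by the
Hardy–Littlewood averages: `√t ∫ ‖∇K_t(x-y)‖ |f(y)| dy ≤ C · sup_{r>0} ⨍_{B(x,r)} |f|`. -/
theorem stmt2 (n : ℕ) (hn : 1 ≤ n) :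
    ∃ C : ℝ, 0 < C ∧
      ∀ (f : EuclideanSpace ℝ (Fin n) → ℝ), Measurable f →
        ∀ (x : EuclideanSpace ℝ (Fin n)) (t : ℝ), 0 < t →
          ENNReal.ofReal (Real.sqrt t) *
              (∫⁻ y, ENNReal.ofReal (‖gradHeatKernel n t (x - y)‖ * |f y|))
            ≤ ENNReal.ofReal C *
                ⨆ (r : ℝ) (_ : 0 < r),
                  (volume (ball x r))⁻¹ * ∫⁻ y in ball x r, ENNReal.ofReal |f y| :=
  stmt2_general n
end

section
/- Let n ≥ 1 be an integer, let s > 0, c > 0, and let p ∈ [1, ∞) with sp ≠ n. Then there exist constants c₁, C₁ > 0 such that for every k ∈ (0,1], c₁ · max(1, k^{s − n/p}) ≤ ( ∫_{{x ∈ ℝ^n : ‖x‖ ≥ 1}} ‖x‖^{−sp} e^{−c p k ‖x‖} dx )^{1/p} ≤ C₁ · max(1, k^{s − n/p}). In particular the L^p({‖x‖ ≥ 1}) norm of x ↦ ‖x‖^{−s} e^{−ck‖x‖} is comparable to 1 when sp > n and comparable to k^{s − n/p} when sp < n. -/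
/-!
In polar coordinates the integral is `|S^{n-1}| · J(k)` with
`J(k) = ∫_1^∞ r^{n-1-sp} e^{-cpkr} dr`. If `sp > n` the power is integrable at infinity, so
`J(1) ≤ J(k) ≤ ∫_1^∞ r^{n-1-sp} dr`. If `sp < n`, substituting `u = kr` gives
`J(k) = k^{sp-n} ∫_k^∞ u^{n-1-sp} e^{-cpu} du`, and the last integral lies between its values at
`k = 1` and `k = 0`. In both cases `J(k) ≍ max(1, k^{sp-n})`; take `p`-th roots.
-/

open Set MeasureTheory Filter Asymptotics

theorem Asymptotics.IsTheta.exists_pos_bounds_of_principal {ι : Type*} {S : Set ι}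
    {f g : ι → ℝ} (h : f =Θ[𝓟 S] g) (hf : ∀ x ∈ S, 0 ≤ f x) (hg : ∀ x ∈ S, 0 ≤ g x) :
    ∃ c C : ℝ, 0 < c ∧ 0 < C ∧ ∀ x ∈ S, c * g x ≤ f x ∧ f x ≤ C * g x := by
  obtain ⟨C, hC, hfg⟩ := h.isBigO.exists_pos
  obtain ⟨D, hD, hgf⟩ := h.isBigO_symm.exists_pos
  refine ⟨D⁻¹, C, inv_pos.mpr hD, hC, fun x hx => ⟨?_, ?_⟩⟩
  · have := eventually_principal.mp hgf.bound x hx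
    rw [Real.norm_of_nonneg (hg x hx), Real.norm_of_nonneg (hf x hx)] at this
    rwa [inv_mul_le_iff₀ hD]
  · have := eventually_principal.mp hfg.bound x hx
    rwa [Real.norm_of_nonneg (hg x hx), Real.norm_of_nonneg (hf x hx)] at this

theorem Asymptotics.isTheta_one_of_forall_mem_Icc {ι : Type*} {S : Set ι} {f : ι → ℝ}
    {m M : ℝ} (hm : 0 < m) (h : ∀ x ∈ S, f x ∈ Icc m M) : f =Θ[𝓟 S] fun _ => (1 : ℝ) := by
  refine ⟨.of_bound M (eventually_principal.mpr fun x hx => ?_),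
    (isBigO_const_left_iff_pos_le_norm one_ne_zero).mpr ?_⟩
  · rw [Real.norm_of_nonneg (hm.le.trans (h x hx).1), norm_one, mul_one]
    exact (h x hx).2
  · refine ⟨m, hm, eventually_principal.mpr fun x hx => ?_⟩
    rw [Real.norm_of_nonneg (hm.le.trans (h x hx).1)]
    exact (h x hx).1

theorem Real.max_one_rpow_rpow {k : ℝ} (hk : 0 < k) (e : ℝ) {r : ℝ} (hr : 0 ≤ r) :
    max 1 (k ^ e) ^ r = max 1 (k ^ (e * r)) := by
  rw [Real.rpow_max zero_le_one (Real.rpow_nonneg hk.le e) hr, Real.one_rpow,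
    ← Real.rpow_mul hk.le]

section RadialIntegral

variable {α b : ℝ}

theorem integrableOn_rpow_mul_exp_neg_mul_Ioi_zero (hα : -1 < α) (hb : 0 < b) :
    IntegrableOn (fun y : ℝ => y ^ α * Real.exp (-(b * y))) (Ioi 0) := by
  simpa only [Real.rpow_one, neg_mul] using
    integrableOn_rpow_mul_exp_neg_mul_rpow hα one_pos hb

theorem integrableOn_rpow_mul_exp_neg_mul_Ioi_one (α : ℝ) (hb : 0 < b) :
    IntegrableOn (fun y : ℝ => y ^ α * Real.exp (-(b * y))) (Ioi 1) := by
  have hmax : IntegrableOn (fun y : ℝ => y ^ (max α 0) * Real.exp (-(b * y))) (Ioi 1) :=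
    (integrableOn_rpow_mul_exp_neg_mul_Ioi_zero (neg_one_lt_zero.trans_le (le_max_right _ _))
      hb).mono_set (Ioi_subset_Ioi zero_le_one)
  refine hmax.mono' (by fun_prop) ?_
  filter_upwards [ae_restrict_mem measurableSet_Ioi] with y (hy : 1 < y)
  rw [Real.norm_of_nonneg (by positivity)]
  gcongr
  · exact hy.le
  · exact le_max_left _ _

theorem setIntegral_Ioi_one_rpow_mul_exp_neg_mul_pos (α : ℝ) (hb : 0 < b) :
    0 < ∫ y in Ioi (1 : ℝ), y ^ α * Real.exp (-(b * y)) := by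
  rw [setIntegral_pos_iff_support_of_nonneg_ae ?_ (integrableOn_rpow_mul_exp_neg_mul_Ioi_one α hb)]
  · have hsupp : Ioi (1 : ℝ) ⊆ Function.support (fun y => y ^ α * Real.exp (-(b * y))) ∩ Ioi 1 :=
      fun y (hy : 1 < y) =>
        ⟨(mul_pos (Real.rpow_pos_of_pos (by linarith) α) (Real.exp_pos _)).ne', hy⟩
    exact (by simp [Real.volume_Ioi] : 0 < volume (Ioi (1 : ℝ))).trans_le (measure_mono hsupp)
  · filter_upwards [ae_restrict_mem measurableSet_Ioi] with y (hy : 1 < y)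
    have : 0 ≤ y := by linarith
    positivity

theorem isTheta_integral_rpow_mul_exp_of_lt_neg_one (hα : α < -1) (hb : 0 < b) :
    (fun k => ∫ y in Ioi (1 : ℝ), y ^ α * Real.exp (-(b * k * y))) =Θ[𝓟 (Ioc 0 1)]
      fun _ => (1 : ℝ) := by
  refine isTheta_one_of_forall_mem_Icc (M := ∫ y in Ioi (1 : ℝ), y ^ α)
    (setIntegral_Ioi_one_rpow_mul_exp_neg_mul_pos α hb) fun k ⟨hk0, hk1⟩ => ⟨?_, ?_⟩
  · refine setIntegral_mono_on (integrableOn_rpow_mul_exp_neg_mul_Ioi_one α hb)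
      (integrableOn_rpow_mul_exp_neg_mul_Ioi_one α (mul_pos hb hk0)) measurableSet_Ioi
      fun y (hy : 1 < y) => ?_
    have : b * k * y ≤ b * y := by nlinarith [mul_pos hb (zero_lt_one.trans hy)]
    gcongr
  · refine setIntegral_mono_on (integrableOn_rpow_mul_exp_neg_mul_Ioi_one α (mul_pos hb hk0))
      (integrableOn_Ioi_rpow_of_lt hα one_pos) measurableSet_Ioi fun y (hy : 1 < y) => ?_
    have : 0 ≤ y := by linarith
    exact mul_le_of_le_one_right (by positivity)
      (Real.exp_le_one_iff.mpr (by simp only [neg_nonpos]; positivity))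

theorem integral_Ioi_one_rpow_mul_exp_neg_mul_mul {k : ℝ} (hk : 0 < k) :
    ∫ y in Ioi (1 : ℝ), y ^ α * Real.exp (-(b * k * y))
      = k ^ (-(α + 1)) * ∫ u in Ioi k, u ^ α * Real.exp (-(b * u)) := by
  have hscale : ∀ y ∈ Ioi (1 : ℝ), y ^ α * Real.exp (-(b * k * y))
      = k ^ (-α) * ((k * y) ^ α * Real.exp (-(b * (k * y)))) := fun y (hy : 1 < y) => by
    rw [Real.mul_rpow hk.le (by linarith), Real.rpow_neg hk.le, ← mul_assoc, ← mul_assoc,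
      inv_mul_cancel₀ (Real.rpow_pos_of_pos hk α).ne', one_mul, ← mul_assoc b]
  rw [setIntegral_congr_fun measurableSet_Ioi hscale, integral_const_mul,
    integral_comp_mul_left_Ioi (fun u => u ^ α * Real.exp (-(b * u))) 1 hk, mul_one,
    smul_eq_mul, ← mul_assoc, ← Real.rpow_neg_one k, ← Real.rpow_add hk, neg_add]

theorem isTheta_integral_rpow_mul_exp_of_neg_one_lt (hα : -1 < α) (hb : 0 < b) :
    (fun k => ∫ y in Ioi (1 : ℝ), y ^ α * Real.exp (-(b * k * y))) =Θ[𝓟 (Ioc 0 1)]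
      fun k => k ^ (-(α + 1)) := by
  set G : ℝ → ℝ := fun t => ∫ u in Ioi t, u ^ α * Real.exp (-(b * u))
  have hint := integrableOn_rpow_mul_exp_neg_mul_Ioi_zero hα hb
  have hnonneg : ∀ t, 0 ≤ t → 0 ≤ᵐ[volume.restrict (Ioi t)]
      fun u : ℝ => u ^ α * Real.exp (-(b * u)) := fun t ht => by
    filter_upwards [ae_restrict_mem measurableSet_Ioi] with u (hu : t < u)
    have : 0 ≤ u := by linarith
    positivity
  have hG : G =Θ[𝓟 (Ioc 0 1)] fun _ => (1 : ℝ) :=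
    isTheta_one_of_forall_mem_Icc (setIntegral_Ioi_one_rpow_mul_exp_neg_mul_pos α hb)
      fun k ⟨hk0, hk1⟩ =>
        ⟨setIntegral_mono_set (hint.mono_set (Ioi_subset_Ioi hk0.le)) (hnonneg k hk0.le)
          (Ioi_subset_Ioi hk1).eventuallyLE,
        setIntegral_mono_set hint (hnonneg 0 le_rfl) (Ioi_subset_Ioi hk0.le).eventuallyLE⟩
  have hJ : (fun k => ∫ y in Ioi (1 : ℝ), y ^ α * Real.exp (-(b * k * y)))
      =ᶠ[𝓟 (Ioc 0 1)] fun k => k ^ (-(α + 1)) * G k :=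
    eventually_principal.mpr fun k hk => integral_Ioi_one_rpow_mul_exp_neg_mul_mul hk.1
  simpa using hJ.trans_isTheta ((isTheta_refl _ _).mul hG)

theorem isTheta_integral_rpow_mul_exp (hα : α ≠ -1) (hb : 0 < b) :
    (fun k => ∫ y in Ioi (1 : ℝ), y ^ α * Real.exp (-(b * k * y))) =Θ[𝓟 (Ioc 0 1)]
      fun k => max 1 (k ^ (-(α + 1))) := by
  rcases hα.lt_or_gt with hα | hα
  · refine (isTheta_integral_rpow_mul_exp_of_lt_neg_one hα hb).trans_eventuallyEq
      (eventually_principal.mpr fun k ⟨hk0, hk1⟩ => ?_)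
    exact (max_eq_left (Real.rpow_le_one hk0.le hk1 (by linarith))).symm
  · refine (isTheta_integral_rpow_mul_exp_of_neg_one_lt hα hb).trans_eventuallyEq
      (eventually_principal.mpr fun k ⟨hk0, hk1⟩ => ?_)
    exact (max_eq_right (Real.one_le_rpow_of_pos_of_le_one_of_nonpos hk0 hk1 (by linarith))).symm

end RadialIntegral

section Polar

variable {E : Type*} [NormedAddCommGroup E] [NormedSpace ℝ E] [Nontrivial E]
  [FiniteDimensional ℝ E] [MeasurableSpace E] [BorelSpace E] (μ : Measure E)
  [μ.IsAddHaarMeasure]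

theorem setIntegral_one_le_norm_eq (f : ℝ → ℝ) :
    ∫ x in {x : E | 1 ≤ ‖x‖}, f ‖x‖ ∂μ
      = Module.finrank ℝ E * μ.real (Metric.ball 0 1) *
          ∫ y in Ioi (1 : ℝ), y ^ (Module.finrank ℝ E - 1) * f y := by
  have hmeas : MeasurableSet {x : E | 1 ≤ ‖x‖} :=
    (isClosed_le continuous_const continuous_norm).measurableSet
  have hIoi : Ioi (0 : ℝ) ∩ Ici 1 = Ici 1 := inter_eq_right.mpr fun y (hy : 1 ≤ y) =>
    show 0 < y by linarith
  have hind : ∫ x in {x : E | 1 ≤ ‖x‖}, f ‖x‖ ∂μ = ∫ x, (Ici 1).indicator f ‖x‖ ∂μ := by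
    rw [← integral_indicator hmeas]
    rfl
  rw [hind, integral_fun_norm_addHaar μ, nsmul_eq_mul, smul_eq_mul, mul_assoc]
  have hsmul : ∀ y : ℝ, y ^ (Module.finrank ℝ E - 1) • (Ici 1).indicator f y
      = (Ici 1).indicator (fun y => y ^ (Module.finrank ℝ E - 1) * f y) y := fun y => by
    rw [smul_eq_mul, indicator_mul_right]
  simp only [hsmul]
  rw [setIntegral_indicator measurableSet_Ici, hIoi, integral_Ici_eq_integral_Ioi]

variable {a b : ℝ}

theorem isTheta_setIntegral_one_le_norm_rpow_mul_exp (ha : a ≠ Module.finrank ℝ E)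
    (hb : 0 < b) :
    (fun k => ∫ x in {x : E | 1 ≤ ‖x‖}, ‖x‖ ^ (-a) * Real.exp (-(b * k * ‖x‖)) ∂μ)
      =Θ[𝓟 (Ioc 0 1)] fun k => max 1 (k ^ (a - Module.finrank ℝ E)) := by
  set d := Module.finrank ℝ E
  have hd : 1 ≤ d := Module.finrank_pos
  have hC : (d : ℝ) * μ.real (Metric.ball 0 1) ≠ 0 :=
    mul_ne_zero (by exact_mod_cast (zero_lt_one.trans_le hd).ne')
      (ENNReal.toReal_pos (Metric.measure_ball_pos μ 0 one_pos).ne' measure_ball_lt_top.ne).ne'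
  have hrpow : ∀ k, ∀ y ∈ Ioi (1 : ℝ), y ^ (d - 1) * (y ^ (-a) * Real.exp (-(b * k * y)))
      = y ^ ((d : ℝ) - 1 - a) * Real.exp (-(b * k * y)) := fun k y (hy : 1 < y) => by
    rw [← mul_assoc, ← Real.rpow_natCast, ← Real.rpow_add (by linarith), Nat.cast_sub hd,
      Nat.cast_one, sub_eq_add_neg _ a]
  have hα : (d : ℝ) - 1 - a ≠ -1 := fun h => ha (by linarith)
  have hradial : (fun k => ∫ x in {x : E | 1 ≤ ‖x‖}, ‖x‖ ^ (-a) * Real.exp (-(b * k * ‖x‖)) ∂μ)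
      = fun k => d * μ.real (Metric.ball 0 1) *
          ∫ y in Ioi (1 : ℝ), y ^ ((d : ℝ) - 1 - a) * Real.exp (-(b * k * y)) := funext fun k => by
    rw [setIntegral_one_le_norm_eq μ (fun r => r ^ (-a) * Real.exp (-(b * k * r))),
      setIntegral_congr_fun measurableSet_Ioi (hrpow k)]
  rw [hradial, show a - d = -((d - 1 - a) + 1) by ring]
  exact (isTheta_integral_rpow_mul_exp hα hb).const_mul_left hC

end Polar

theorem stmt9_general (n : ℕ) (hn : 1 ≤ n) (s c : ℝ) (hc : 0 < c)
    (p : ℝ) (hp : 1 ≤ p) (hsp : s * p ≠ n) :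
    ∃ c₁ C₁ : ℝ, 0 < c₁ ∧ 0 < C₁ ∧
      ∀ k : ℝ, k ∈ Ioc (0 : ℝ) 1 →
        c₁ * max 1 (k ^ (s - n / p))
            ≤ (∫ x in {x : EuclideanSpace ℝ (Fin n) | 1 ≤ ‖x‖},
                ‖x‖ ^ (-(s * p)) * Real.exp (-(c * p * k * ‖x‖))) ^ (1 / p) ∧
        (∫ x in {x : EuclideanSpace ℝ (Fin n) | 1 ≤ ‖x‖},
                ‖x‖ ^ (-(s * p)) * Real.exp (-(c * p * k * ‖x‖))) ^ (1 / p)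
            ≤ C₁ * max 1 (k ^ (s - n / p)) := by
  have hp0 : 0 < p := zero_lt_one.trans_le hp
  have : Nontrivial (EuclideanSpace ℝ (Fin n)) :=
    Module.nontrivial_of_finrank_pos (by rwa [finrank_euclideanSpace_fin])
  have hI := isTheta_setIntegral_one_le_norm_rpow_mul_exp volume
    (by rwa [finrank_euclideanSpace_fin]) (mul_pos hc hp0)
  rw [finrank_euclideanSpace_fin] at hI
  have hInonneg : ∀ k, 0 ≤ ∫ x in {x : EuclideanSpace ℝ (Fin n) | 1 ≤ ‖x‖},
      ‖x‖ ^ (-(s * p)) * Real.exp (-(c * p * k * ‖x‖)) :=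
    fun k => integral_nonneg fun x => by positivity
  have hroot := (hI.rpow (r := 1 / p) (.of_forall hInonneg)
    (.of_forall fun k => zero_le_one.trans (le_max_left _ _))).trans_eventuallyEq
      (eventually_principal.mpr fun k hk => Real.max_one_rpow_rpow hk.1 _ (by positivity))
  obtain ⟨c₁, C₁, hc₁, hC₁, hbounds⟩ := hroot.exists_pos_bounds_of_principal
    (fun k _ => by positivity) (fun k _ => zero_le_one.trans (le_max_left _ _))
  refine ⟨c₁, C₁, hc₁, hC₁, fun k hk => ?_⟩
  rw [show s - n / p = (s * p - n) * (1 / p) by field_simp]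
  exact hbounds k hk

/-- Two-sided estimate for the `L^p({‖x‖ ≥ 1})` norm of the weight
`x ↦ ‖x‖^{-s} e^{-ck‖x‖}`: it is comparable, uniformly in `k ∈ (0,1]`, to
`max(1, k^{s - n/p})`. -/
theorem stmt9 (n : ℕ) (hn : 1 ≤ n) (s c : ℝ) (hs : 0 < s) (hc : 0 < c)
    (p : ℝ) (hp : 1 ≤ p) (hsp : s * p ≠ n) :
    ∃ c₁ C₁ : ℝ, 0 < c₁ ∧ 0 < C₁ ∧
      ∀ k : ℝ, k ∈ Ioc (0 : ℝ) 1 →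
        c₁ * max 1 (k ^ (s - n / p))
            ≤ (∫ x in {x : EuclideanSpace ℝ (Fin n) | 1 ≤ ‖x‖},
                ‖x‖ ^ (-(s * p)) * Real.exp (-(c * p * k * ‖x‖))) ^ (1 / p) ∧
        (∫ x in {x : EuclideanSpace ℝ (Fin n) | 1 ≤ ‖x‖},
                ‖x‖ ^ (-(s * p)) * Real.exp (-(c * p * k * ‖x‖))) ^ (1 / p)
            ≤ C₁ * max 1 (k ^ (s - n / p)) :=
  stmt9_general n hn s c hc p hp hsp
end

section
/- Let n ≥ 3 be an integer and 1 < p < ∞. For f ∈ L^p(ℝ^n), define Λ̃f(x) = (1+‖x‖)^{1−n} ∫_{ℝ^n} (1+‖y‖)^{1−n} f(y) dy. Then the following are equivalent: (i) n/(n−1) < p < n; (ii) there exists a constant C > 0 such that for every f ∈ L^p(ℝ^n) the function y ↦ (1+‖y‖)^{1−n} f(y) is integrable, Λ̃f ∈ L^p(ℝ^n), and ‖Λ̃f‖_{L^p} ≤ C ‖f‖_{L^p}. -/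
/-!
Write `ω(x) = (1 + ‖x‖)^(1-n)`, so that `Λ̃f = (∫ ω f) • ω` and `ω ∈ Lʳ` exactly when
`r (n - 1) > n`. If `n/(n-1) < p < n` then `ω` lies in `Lᵖ` and in `Lᑫ` for the conjugate
exponent `q`, and Hölder's inequality gives `‖Λ̃f‖ₚ ≤ ‖ω‖_q ‖ω‖ₚ ‖f‖ₚ`. Conversely, applying
the bound to the indicator of the unit ball shows `ω ∈ Lᵖ`, i.e. `p > n/(n-1)`. It then yields
`|∫ ω f| ≤ K ‖f‖ₚ`; if `p ≥ n`, testing this on `f = 1_{B_R} (1 + ‖y‖)⁻¹` bounds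
`∫_{B_R} (1 + ‖y‖)^(-n)` uniformly in `R`, contradicting the divergence of that integral.
-/

open Set MeasureTheory Metric Module
open scoped ENNReal

section RankOne

variable {α : Type*} [MeasurableSpace α] {μ : Measure α} {ω f : α → ℝ} {p q : ℝ≥0∞}

theorem eLpNorm_mul_integral_mul (ω f : α → ℝ) (p : ℝ≥0∞) (μ : Measure α) :
    eLpNorm (fun x => ω x * ∫ y, ω y * f y ∂μ) p μ = ‖∫ y, ω y * f y ∂μ‖ₑ * eLpNorm ω p μ := by
  have : (fun x => ω x * ∫ y, ω y * f y ∂μ) = (∫ y, ω y * f y ∂μ) • ω := by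
    ext x; simp [mul_comm]
  rw [this, eLpNorm_const_smul]

theorem enorm_integral_mul_le [p.HolderConjugate q] (hω : AEStronglyMeasurable ω μ)
    (hf : AEStronglyMeasurable f μ) :
    ‖∫ y, ω y * f y ∂μ‖ₑ ≤ eLpNorm ω q μ * eLpNorm f p μ :=
  calc ‖∫ y, ω y * f y ∂μ‖ₑ ≤ eLpNorm (ω • f) 1 μ := by
        rw [eLpNorm_one_eq_lintegral_enorm]; exact enorm_integral_le_lintegral_enorm _
    _ ≤ eLpNorm ω q μ * eLpNorm f p μ := eLpNorm_smul_le_mul_eLpNorm hf hω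

theorem eLpNorm_mul_integral_mul_le [p.HolderConjugate q] (hω : AEStronglyMeasurable ω μ)
    (hf : AEStronglyMeasurable f μ) :
    eLpNorm (fun x => ω x * ∫ y, ω y * f y ∂μ) p μ
      ≤ eLpNorm ω q μ * eLpNorm ω p μ * eLpNorm f p μ := by
  rw [eLpNorm_mul_integral_mul, mul_right_comm]
  gcongr
  exact enorm_integral_mul_le hω hf

theorem exists_eLpNorm_mul_integral_mul_le [p.HolderConjugate q] (hωp : MemLp ω p μ)
    (hωq : MemLp ω q μ) :
    ∃ C : ℝ, 0 < C ∧ ∀ f : α → ℝ, MemLp f p μ →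
      Integrable (fun y => ω y * f y) μ ∧
      MemLp (fun x => ω x * ∫ y, ω y * f y ∂μ) p μ ∧
      eLpNorm (fun x => ω x * ∫ y, ω y * f y ∂μ) p μ ≤ ENNReal.ofReal C * eLpNorm f p μ := by
  set M := eLpNorm ω q μ * eLpNorm ω p μ
  have hM : M ≤ ENNReal.ofReal (M.toReal + 1) := by
    rw [ENNReal.le_ofReal_iff_toReal_le
      (ENNReal.mul_ne_top hωq.eLpNorm_ne_top hωp.eLpNorm_ne_top) (by positivity)]
    linarith
  exact ⟨M.toReal + 1, by positivity, fun f hf => ⟨hωq.integrable_mul hf, hωp.mul_const _,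
    (eLpNorm_mul_integral_mul_le hωp.1 hf.1).trans (by gcongr)⟩⟩

theorem MemLp.of_mul_integral_mul (h : MemLp (fun x => ω x * ∫ y, ω y * f y ∂μ) p μ)
    (hc : ∫ y, ω y * f y ∂μ ≠ 0) : MemLp ω p μ := by
  simpa [mul_assoc, mul_inv_cancel₀ hc] using h.mul_const (∫ y, ω y * f y ∂μ)⁻¹

theorem enorm_integral_mul_le_of_eLpNorm_le {C : ℝ≥0∞} (hω₀ : eLpNorm ω p μ ≠ 0)
    (hω : eLpNorm ω p μ ≠ ∞)
    (h : eLpNorm (fun x => ω x * ∫ y, ω y * f y ∂μ) p μ ≤ C * eLpNorm f p μ) :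
    ‖∫ y, ω y * f y ∂μ‖ₑ ≤ C / eLpNorm ω p μ * eLpNorm f p μ := by
  rw [eLpNorm_mul_integral_mul] at h
  rw [← ENNReal.mul_div_right_comm, ENNReal.le_div_iff_mul_le (.inl hω₀) (.inl hω)]
  exact h

end RankOne

theorem ENNReal.le_rpow_of_le_mul_rpow_inv {x K : ℝ≥0∞} {p : ℝ} (hp : 1 < p) (hx : x ≠ ∞)
    (h : x ≤ K * x ^ p⁻¹) : x ≤ K ^ (p / (p - 1)) := by
  rcases eq_or_ne x 0 with rfl | hx₀
  · exact zero_le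
  have hp₁ : p - 1 ≠ 0 := sub_ne_zero.2 hp.ne'
  have hsplit : x = x ^ (1 - p⁻¹) * x ^ p⁻¹ := by
    rw [← ENNReal.rpow_add _ _ hx₀ hx, sub_add_cancel, ENNReal.rpow_one]
  have hle : x ^ (1 - p⁻¹) ≤ K := by
    have hpos : 0 < x ^ p⁻¹ := ENNReal.rpow_pos (pos_iff_ne_zero.2 hx₀) hx
    have hfin : x ^ p⁻¹ ≠ ∞ := ENNReal.rpow_ne_top_of_nonneg (by positivity) hx
    refine (ENNReal.mul_le_mul_iff_left hpos.ne' hfin).1 ?_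
    rwa [← hsplit]
  calc x = (x ^ (1 - p⁻¹)) ^ (p / (p - 1)) := by
        rw [← ENNReal.rpow_mul, show (1 - p⁻¹) * (p / (p - 1)) = 1 by field_simp,
          ENNReal.rpow_one]
    _ ≤ K ^ (p / (p - 1)) := by gcongr

theorem div_sub_one_lt_div_sub_one_iff {a b : ℝ} (ha : 1 < a) (hb : 1 < b) :
    a / (a - 1) < b / (b - 1) ↔ b < a := by
  rw [div_lt_div_iff₀ (by linarith) (by linarith)]
  constructor <;> intro h <;> nlinarith

section Weight

variable {E : Type*} [NormedAddCommGroup E]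

theorem continuous_one_add_norm_rpow (a : ℝ) : Continuous fun x : E => (1 + ‖x‖) ^ a :=
  Continuous.rpow_const (by fun_prop) fun x => .inl (by positivity)

variable [MeasurableSpace E] [BorelSpace E] {μ : Measure E}

theorem eLpNorm_one_add_norm_rpow_ne_zero [NeZero μ] (a : ℝ) {p : ℝ≥0∞} (hp : p ≠ 0) :
    eLpNorm (fun x : E => (1 + ‖x‖) ^ a) p μ ≠ 0 := by
  rw [Ne, eLpNorm_eq_zero_iff (continuous_one_add_norm_rpow a).aestronglyMeasurable hp]
  intro h
  obtain ⟨x, hx⟩ := h.exists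
  exact (by positivity : (1 + ‖x‖) ^ a ≠ 0) hx

variable [NormedSpace ℝ E] [FiniteDimensional ℝ E] [μ.IsAddHaarMeasure]

theorem not_integrable_one_add_norm_rpow_neg_finrank [Nontrivial E] :
    ¬ Integrable (fun x : E => (1 + ‖x‖) ^ (-(finrank ℝ E : ℝ))) μ := by
  set d := finrank ℝ E
  have hd : 1 ≤ d := finrank_pos
  rw [integrable_fun_norm_addHaar μ (f := fun t => (1 + t) ^ (-(d : ℝ)))]
  intro h
  have h1 : IntegrableOn (fun y : ℝ => y ^ (d - 1) • (1 + y) ^ (-(d : ℝ))) (Ioi 1) :=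
    h.mono_set (Ioi_subset_Ioi zero_le_one)
  -- on `(1, ∞)` the radial integrand is at least `2 ^ (-d) / y`
  refine not_integrableOn_Ioi_inv ((h1.const_mul (2 ^ (d : ℝ))).mono' (by fun_prop) ?_)
  filter_upwards [ae_restrict_mem measurableSet_Ioi] with y (hy : 1 < y)
  have hy₀ : 0 < y := by linarith
  rw [Real.norm_of_nonneg (by positivity), smul_eq_mul]
  have hle : (2 * y) ^ (-(d : ℝ)) ≤ (1 + y) ^ (-(d : ℝ)) :=
    Real.rpow_le_rpow_of_nonpos (by positivity) (by linarith) (by simp)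
  obtain ⟨k, hk⟩ : ∃ k, d = k + 1 := ⟨d - 1, by omega⟩
  rw [hk] at hle ⊢
  calc y⁻¹ = 2 ^ ((k + 1 : ℕ) : ℝ) * (y ^ k * (2 * y) ^ (-((k + 1 : ℕ) : ℝ))) := by
        rw [Real.rpow_neg (by positivity), Real.rpow_natCast, Real.rpow_natCast]
        field_simp
        ring
    _ ≤ _ := by
        rw [Nat.add_sub_cancel]
        gcongr

theorem integrable_one_add_norm_rpow_neg_iff [Nontrivial E] {r : ℝ} :
    Integrable (fun x : E => (1 + ‖x‖) ^ (-r)) μ ↔ (finrank ℝ E : ℝ) < r := by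
  refine ⟨fun h => ?_, integrable_one_add_norm⟩
  by_contra! hr
  refine not_integrable_one_add_norm_rpow_neg_finrank (μ := μ)
    (h.mono' (continuous_one_add_norm_rpow _).aestronglyMeasurable (.of_forall fun x => ?_))
  rw [Real.norm_of_nonneg (by positivity)]
  exact Real.rpow_le_rpow_of_exponent_le (by linarith [norm_nonneg x]) (by linarith)

theorem memLp_one_add_norm_rpow_neg_iff [Nontrivial E] {a r : ℝ} (hr : 0 < r) :
    MemLp (fun x : E => (1 + ‖x‖) ^ (-a)) (ENNReal.ofReal r) μ ↔ (finrank ℝ E : ℝ) < r * a := by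
  rw [← integrable_norm_rpow_iff (continuous_one_add_norm_rpow _).aestronglyMeasurable
    (by simpa using hr) ENNReal.ofReal_ne_top, ENNReal.toReal_ofReal hr.le,
    ← integrable_one_add_norm_rpow_neg_iff (μ := μ)]
  refine integrable_congr (.of_forall fun x => ?_)
  dsimp only
  rw [Real.norm_of_nonneg (by positivity), ← Real.rpow_mul (by positivity)]
  ring_nf

theorem memLp_one_add_norm_rpow_of_memLp_mul_integral_indicator {a : ℝ} {p : ℝ≥0∞}
    (h : MemLp (fun x : E => (1 + ‖x‖) ^ a *
      ∫ y, (1 + ‖y‖) ^ a * (ball (0 : E) 1).indicator (fun _ => (1 : ℝ)) y ∂μ) p μ) :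
    MemLp (fun x : E => (1 + ‖x‖) ^ a) p μ := by
  refine MemLp.of_mul_integral_mul h (ne_of_gt ?_)
  simp only [← indicator_mul_right _ fun y : E => (1 + ‖y‖) ^ a, mul_one]
  rw [integral_indicator measurableSet_ball, setIntegral_pos_iff_support_of_nonneg_ae
    (.of_forall fun _ => by positivity)
    (((continuous_one_add_norm_rpow a).continuousOn.integrableOn_compact
      (isCompact_closedBall 0 1)).mono_set ball_subset_closedBall)]
  exact (measure_ball_pos μ 0 one_pos).trans_le
    (measure_mono fun x hx => ⟨(by positivity : (1 + ‖x‖) ^ a ≠ 0), hx⟩)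

theorem memLp_indicator_ball_one_add_norm_rpow {a : ℝ} (ha : a ≤ 0) (p : ℝ≥0∞) (R : ℝ) :
    MemLp ((ball (0 : E) R).indicator fun y => (1 + ‖y‖) ^ a) p μ := by
  refine HasCompactSupport.memLp_of_bound
    (.intro (isCompact_closedBall 0 R) fun x hx =>
      indicator_of_notMem (fun h => hx (ball_subset_closedBall h)) _)
    ((continuous_one_add_norm_rpow a).aestronglyMeasurable.indicator measurableSet_ball) 1
    (.of_forall fun x => ?_)
  rw [norm_indicator_eq_indicator_norm]
  refine indicator_apply_le' (fun _ => ?_) fun _ => zero_le_one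
  rw [Real.norm_of_nonneg (by positivity)]
  exact Real.rpow_le_one_of_one_le_of_nonpos (by linarith [norm_nonneg x]) ha

theorem setLIntegral_ball_le_of_enorm_integral_le {p : ℝ} (hp : 1 < p)
    (hdp : (finrank ℝ E : ℝ) ≤ p) {K : ℝ≥0∞}
    (h : ∀ f : E → ℝ, MemLp f (ENNReal.ofReal p) μ →
      ‖∫ y, (1 + ‖y‖) ^ ((1 : ℝ) - finrank ℝ E) * f y ∂μ‖ₑ
        ≤ K * eLpNorm f (ENNReal.ofReal p) μ) (R : ℝ) :
    ∫⁻ x in ball 0 R, ENNReal.ofReal ((1 + ‖x‖) ^ (-(finrank ℝ E : ℝ))) ∂μ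
      ≤ K ^ (p / (p - 1)) := by
  set d : ℝ := (finrank ℝ E : ℝ)
  set g : E → ℝ := fun x => (1 + ‖x‖) ^ (-d)
  set J := ∫⁻ x in ball 0 R, ENNReal.ofReal (g x) ∂μ
  -- Testing on `f = 1_{B_R} (1 + ‖y‖)⁻¹`: then `ω f = 1_{B_R} g`, and `|f|ᵖ ≤ g` as `p ≥ d`.
  set f : E → ℝ := (ball 0 R).indicator fun y => (1 + ‖y‖) ^ (-1 : ℝ)
  have hωf : (fun y => (1 + ‖y‖) ^ ((1 : ℝ) - d) * f y) = (ball 0 R).indicator g := by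
    ext y
    by_cases hy : y ∈ ball (0 : E) R
    · simp only [f, g, indicator_of_mem hy, ← Real.rpow_add (by positivity : 0 < 1 + ‖y‖)]
      ring_nf
    · simp [f, hy]
  have hgR : IntegrableOn g (ball 0 R) μ :=
    ((continuous_one_add_norm_rpow _).continuousOn.integrableOn_compact
      (isCompact_closedBall 0 R)).mono_set ball_subset_closedBall
  have hJ : ‖∫ y, (1 + ‖y‖) ^ ((1 : ℝ) - d) * f y ∂μ‖ₑ = J := by
    rw [hωf, integral_indicator measurableSet_ball,
      Real.enorm_of_nonneg (setIntegral_nonneg measurableSet_ball fun _ _ => by positivity),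
      ofReal_integral_eq_lintegral_ofReal hgR (.of_forall fun _ => by positivity)]
  have hfp : eLpNorm f (ENNReal.ofReal p) μ ≤ J ^ p⁻¹ := by
    rw [eLpNorm_indicator_eq_eLpNorm_restrict measurableSet_ball,
      eLpNorm_eq_lintegral_rpow_enorm_toReal (by simpa using hp.trans_le' zero_le_one)
        ENNReal.ofReal_ne_top, ENNReal.toReal_ofReal (by linarith), one_div]
    gcongr
    refine lintegral_mono fun x => ?_
    rw [Real.enorm_of_nonneg (by positivity), ENNReal.ofReal_rpow_of_nonneg (by positivity)
      (by linarith), ← Real.rpow_mul (by positivity)]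
    exact ENNReal.ofReal_le_ofReal
      (Real.rpow_le_rpow_of_exponent_le (by linarith [norm_nonneg x]) (by linarith))
  refine ENNReal.le_rpow_of_le_mul_rpow_inv hp (hJ ▸ enorm_ne_top) ?_
  calc J = _ := hJ.symm
    _ ≤ _ := h f (memLp_indicator_ball_one_add_norm_rpow (by norm_num) _ R)
    _ ≤ K * J ^ p⁻¹ := by gcongr

theorem lt_finrank_of_enorm_integral_le [Nontrivial E] {p : ℝ} (hp : 1 < p) {K : ℝ≥0∞}
    (hK : K ≠ ∞)
    (h : ∀ f : E → ℝ, MemLp f (ENNReal.ofReal p) μ →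
      ‖∫ y, (1 + ‖y‖) ^ ((1 : ℝ) - finrank ℝ E) * f y ∂μ‖ₑ
        ≤ K * eLpNorm f (ENNReal.ofReal p) μ) :
    p < finrank ℝ E := by
  by_contra! hdp
  have hfin : ∫⁻ x, ENNReal.ofReal ((1 + ‖x‖) ^ (-(finrank ℝ E : ℝ))) ∂μ < ∞ := by
    rw [← setLIntegral_univ, ← iUnion_ball_nat 0, setLIntegral_iUnion_of_directed _
      (Monotone.directed_le fun i j hij => ball_subset_ball (by exact_mod_cast hij))]
    exact (iSup_le fun k : ℕ => setLIntegral_ball_le_of_enorm_integral_le hp hdp h k).trans_lt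
      (ENNReal.rpow_lt_top_of_nonneg (div_nonneg (by linarith) (by linarith)) hK)
  exact not_integrable_one_add_norm_rpow_neg_finrank
    ⟨(continuous_one_add_norm_rpow _).aestronglyMeasurable,
      (hasFiniteIntegral_iff_ofReal (.of_forall fun _ => by positivity)).2 hfin⟩

end Weight

/-- The rank-one operator `Λ̃f(x) = (1+‖x‖)^{1-n} ∫ (1+‖y‖)^{1-n} f(y) dy` is bounded
on `L^p(ℝ^n)` (for `n ≥ 3`, `1 < p < ∞`) if and only if `n/(n-1) < p < n`. -/
theorem stmt11 (n : ℕ) (hn : 3 ≤ n) (p : ℝ) (hp : 1 < p) :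
    ((n : ℝ) / ((n : ℝ) - 1) < p ∧ p < (n : ℝ)) ↔
      ∃ C : ℝ, 0 < C ∧
        ∀ f : EuclideanSpace ℝ (Fin n) → ℝ, MemLp f (ENNReal.ofReal p) volume →
          Integrable (fun y => (1 + ‖y‖) ^ ((1 : ℝ) - n) * f y) volume ∧
          MemLp (fun x : EuclideanSpace ℝ (Fin n) => (1 + ‖x‖) ^ ((1 : ℝ) - n) *
              ∫ y, (1 + ‖y‖) ^ ((1 : ℝ) - n) * f y) (ENNReal.ofReal p) volume ∧
          eLpNorm (fun x : EuclideanSpace ℝ (Fin n) => (1 + ‖x‖) ^ ((1 : ℝ) - n) *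
              ∫ y, (1 + ‖y‖) ^ ((1 : ℝ) - n) * f y) (ENNReal.ofReal p) volume
            ≤ ENNReal.ofReal C * eLpNorm f (ENNReal.ofReal p) volume := by
  have : Nonempty (Fin n) := ⟨⟨0, by omega⟩⟩
  have hn₁ : (1 : ℝ) < n := by exact_mod_cast (by omega : 1 < n)
  set ω := fun x : EuclideanSpace ℝ (Fin n) => (1 + ‖x‖) ^ ((1 : ℝ) - n)
  have hω (r : ℝ) (hr : 0 < r) : MemLp ω (ENNReal.ofReal r) volume ↔ (n : ℝ) / (n - 1) < r := by
    simp only [ω, show (1 : ℝ) - n = -(n - 1) by ring]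
    rw [memLp_one_add_norm_rpow_neg_iff hr, finrank_euclideanSpace_fin,
      div_lt_iff₀ (by linarith)]
  constructor
  · rintro ⟨hp₁, hpn⟩
    have hpq := Real.HolderConjugate.conjExponent hp
    have := hpq.ennrealOfReal
    exact exists_eLpNorm_mul_integral_mul_le ((hω p (by linarith)).2 hp₁)
      ((hω _ hpq.symm.pos).2 (by rwa [Real.conjExponent, div_sub_one_lt_div_sub_one_iff hn₁ hp]))
  · rintro ⟨C, -, hC⟩
    obtain ⟨-, hΛ, -⟩ := hC _
      (memLp_indicator_const _ measurableSet_ball (1 : ℝ) (.inr measure_ball_lt_top.ne))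
    have hωp := memLp_one_add_norm_rpow_of_memLp_mul_integral_indicator hΛ
    refine ⟨(hω p (by linarith)).1 hωp, ?_⟩
    have hω₀ : eLpNorm ω (ENNReal.ofReal p) volume ≠ 0 :=
      eLpNorm_one_add_norm_rpow_ne_zero _ (ENNReal.ofReal_pos.2 (by linarith)).ne'
    have key := lt_finrank_of_enorm_integral_le (E := EuclideanSpace ℝ (Fin n)) (μ := volume)
      (p := p) (K := ENNReal.ofReal C / eLpNorm ω (ENNReal.ofReal p) volume)
    rw [finrank_euclideanSpace_fin] at key
    exact key hp (ENNReal.div_ne_top ENNReal.ofReal_ne_top hω₀)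
      fun f hf => enorm_integral_mul_le_of_eLpNorm_le hω₀ hωp.eLpNorm_ne_top (hC f hf).2.2
end

section
/- Let n ≥ 3 be an integer and let 1 < p ≤ n, with p′ = p/(p−1). Then sup_{0<k≤1} k · ( ∫_{{y ∈ ℝ^n : ‖y‖ ≥ 1}} ‖y‖^{−(n−2)p′} e^{−p′k‖y‖} dy )^{1/p′} < ∞. -/
/-!
In polar coordinates the integral is `n |B₁| ∫_1^∞ r^{n-1-(n-2)p'} e^{-p'k r} dr`. Since `p ≤ n`,
the exponent satisfies `n-1-(n-2)p' ≤ p'-1`, and on `[1, ∞)` the integrand is dominated by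
`r^{p'-1} e^{-p'k r}`, whose integral over `(0, ∞)` is `Γ(p') (p'k)^{-p'}`. Its `1/p'`-th power is
`Γ(p')^{1/p'} / (p'k)`, so the factor `k` cancels and the supremum is at most
`(n |B₁| Γ(p'))^{1/p'} / p'`.
-/

open Set MeasureTheory

theorem setIntegral_Ici_one_rpow_mul_exp_neg_le {s a c : ℝ} (ha : 0 < a) (hc : 0 < c)
    (hs : s ≤ a - 1) :
    ∫ r in Ici (1 : ℝ), r ^ s * Real.exp (-(c * r)) ≤ (1 / c) ^ a * Real.Gamma a := by
  have hGamma := Real.integral_rpow_mul_exp_neg_mul_Ioi ha hc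
  have hint : IntegrableOn (fun r : ℝ ↦ r ^ (a - 1) * Real.exp (-(c * r))) (Ioi 0) :=
    .of_integral_ne_zero (by rw [hGamma]; positivity)
  have hIci : Ici (1 : ℝ) ⊆ Ioi 0 := fun r (hr : 1 ≤ r) ↦ show 0 < r by linarith
  calc ∫ r in Ici (1 : ℝ), r ^ s * Real.exp (-(c * r))
      ≤ ∫ r in Ici (1 : ℝ), r ^ (a - 1) * Real.exp (-(c * r)) := by
        refine integral_mono_of_nonneg ?_ (hint.mono_set hIci) ?_
        all_goals filter_upwards [self_mem_ae_restrict measurableSet_Ici] with r (hr : 1 ≤ r)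
        · have : 0 ≤ r := by linarith
          positivity
        · gcongr
    _ ≤ ∫ r in Ioi (0 : ℝ), r ^ (a - 1) * Real.exp (-(c * r)) := by
        refine setIntegral_mono_set hint ?_ (.of_forall hIci)
        filter_upwards [self_mem_ae_restrict measurableSet_Ioi] with r (hr : 0 < r)
        positivity
    _ = (1 / c) ^ a * Real.Gamma a := hGamma

section

variable {E : Type*} [NormedAddCommGroup E] [NormedSpace ℝ E] [FiniteDimensional ℝ E]
  [Nontrivial E] [MeasurableSpace E] [BorelSpace E] (μ : Measure E) [μ.IsAddHaarMeasure]

theorem setIntegral_one_le_norm_fun_norm (g : ℝ → ℝ) :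
    ∫ y in {y : E | 1 ≤ ‖y‖}, g ‖y‖ ∂μ =
      Module.finrank ℝ E * μ.real (Metric.ball 0 1) *
        ∫ r in Ici (1 : ℝ), r ^ (Module.finrank ℝ E - 1) * g r := by
  have hS : MeasurableSet {y : E | 1 ≤ ‖y‖} :=
    measurableSet_le measurable_const measurable_norm
  have hIci : Ici (1 : ℝ) ⊆ Ioi 0 := fun r (hr : 1 ≤ r) ↦ show 0 < r by linarith
  calc ∫ y in {y : E | 1 ≤ ‖y‖}, g ‖y‖ ∂μ = ∫ y, (Ici (1 : ℝ)).indicator g ‖y‖ ∂μ := by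
        rw [← integral_indicator hS]; rfl
    _ = _ := by
        rw [integral_fun_norm_addHaar, nsmul_eq_mul, smul_eq_mul]
        simp_rw [smul_eq_mul, ← indicator_mul_right _ (fun r ↦ r ^ (Module.finrank ℝ E - 1))]
        rw [setIntegral_indicator measurableSet_Ici, inter_eq_right.mpr hIci, mul_assoc]

theorem setIntegral_one_le_norm_rpow_mul_exp_neg_le {s a c : ℝ} (ha : 0 < a)
    (hc : 0 < c) (hs : Module.finrank ℝ E + s ≤ a) :
    ∫ y in {y : E | 1 ≤ ‖y‖}, ‖y‖ ^ s * Real.exp (-(c * ‖y‖)) ∂μ ≤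
      Module.finrank ℝ E * μ.real (Metric.ball 0 1) * ((1 / c) ^ a * Real.Gamma a) := by
  have hd : 1 ≤ Module.finrank ℝ E := Module.finrank_pos
  rw [setIntegral_one_le_norm_fun_norm μ fun r ↦ r ^ s * Real.exp (-(c * r))]
  gcongr
  calc ∫ r in Ici (1 : ℝ), r ^ (Module.finrank ℝ E - 1) * (r ^ s * Real.exp (-(c * r)))
      = ∫ r in Ici (1 : ℝ), r ^ (Module.finrank ℝ E - 1 + s) * Real.exp (-(c * r)) := by
        refine setIntegral_congr_fun measurableSet_Ici fun r (hr : 1 ≤ r) ↦ ?_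
        rw [Real.rpow_add (by linarith), ← Real.rpow_natCast, Nat.cast_sub hd, Nat.cast_one,
          mul_assoc]
    _ ≤ (1 / c) ^ a * Real.Gamma a :=
        setIntegral_Ici_one_rpow_mul_exp_neg_le ha hc (by linarith)

end

theorem stmt19_general (n : ℕ) (p : ℝ) (hp₁ : 1 < p) (hp₂ : p ≤ (n : ℝ)) :
    ∃ C : ℝ,
      ∀ k : ℝ, k ∈ Ioc (0 : ℝ) 1 →
        k * (∫ y in {y : EuclideanSpace ℝ (Fin n) | 1 ≤ ‖y‖},
              ‖y‖ ^ (-(((n : ℝ) - 2) * (p / (p - 1))))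
                * Real.exp (-((p / (p - 1)) * k * ‖y‖))) ^ (1 / (p / (p - 1)))
          ≤ C := by
  set q := p / (p - 1)
  have hq : 0 < q := div_pos (by linarith) (by linarith)
  have hnq : (n : ℝ) + -(((n : ℝ) - 2) * q) ≤ q := by
    have hp : p - 1 ≠ 0 := by linarith
    have : q - ((n : ℝ) + -(((n : ℝ) - 2) * q)) = (n - p) / (p - 1) := by
      simp only [q]; field_simp; ring
    linarith [div_nonneg (sub_nonneg.2 hp₂) (sub_nonneg.2 hp₁.le)]
  have : NeZero n := ⟨by rintro rfl; norm_num at hp₂; linarith⟩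
  set B := n * volume.real (Metric.ball (0 : EuclideanSpace ℝ (Fin n)) 1) * Real.Gamma q
  refine ⟨B ^ (1 / q) / q, fun k hk ↦ ?_⟩
  obtain ⟨hk₀, -⟩ := hk
  have hI := setIntegral_one_le_norm_rpow_mul_exp_neg_le volume hq (mul_pos hq hk₀)
    (by rwa [finrank_euclideanSpace_fin])
  rw [finrank_euclideanSpace_fin, ← mul_assoc, mul_right_comm] at hI
  have hB : 0 ≤ B := by positivity
  calc _ ≤ k * (B * (1 / (q * k)) ^ q) ^ (1 / q) := by gcongr
    _ = B ^ (1 / q) / q := by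
          rw [Real.mul_rpow hB (by positivity), one_div q,
            Real.rpow_rpow_inv (by positivity) hq.ne']
          field_simp

/-- The `I₂`-term estimate: for `n ≥ 3` and `1 < p ≤ n`, with `p' = p/(p-1)`,
`sup_{0<k≤1} k · (∫_{‖y‖≥1} ‖y‖^{-(n-2)p'} e^{-p'k‖y‖} dy)^{1/p'} < ∞`. -/
theorem stmt19 (n : ℕ) (hn : 3 ≤ n) (p : ℝ) (hp₁ : 1 < p) (hp₂ : p ≤ (n : ℝ)) :
    ∃ C : ℝ,
      ∀ k : ℝ, k ∈ Ioc (0 : ℝ) 1 →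
        k * (∫ y in {y : EuclideanSpace ℝ (Fin n) | 1 ≤ ‖y‖},
              ‖y‖ ^ (-(((n : ℝ) - 2) * (p / (p - 1))))
                * Real.exp (-((p / (p - 1)) * k * ‖y‖))) ^ (1 / (p / (p - 1)))
          ≤ C :=
  stmt19_general n p hp₁ hp₂
end
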